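/- arXiv:1506.03218 — 3 statements merged into one kernel-verified Lean document; each statement's English description precedes it below -/
import Mathlib

section
/- For all integers t ≥ 11, every edge-coloured graph G on n vertices in which every monochromatic subgraph has maximum degree at most t can be edge-decomposed into at most ⌊tn/2⌋ rainbow matchings. -/
open Finset

variable {V : Type*}

/-- A rainbow matching: a set of edges of `G`, pairwise vertex-disjoint, with
pairwise distinct colours. -/
def IsRainbowMatching (G : SimpleGraph V) (c : Sym2 V → ℕ) (M : Finset (Sym2 V)) : Prop :=
  (∀ e ∈ M, e ∈ G.edgeSet) ∧
  (∀ e ∈ M, ∀ f ∈ M, e ≠ f → ∀ v : V, v ∈ e → v ∉ f) ∧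
  Set.InjOn c (M : Set (Sym2 V))

/-- `v` is covered by an edge of `M`. -/
def coveredBy (M : Finset (Sym2 V)) (v : V) : Prop := ∃ e ∈ M, v ∈ e

/-- The colour degree of `v`: the number of distinct colours on edges at `v`. -/
noncomputable def colourDegree (G : SimpleGraph V) (c : Sym2 V → ℕ) (v : V) : ℕ :=
  {i : ℕ | ∃ e ∈ G.edgeSet, v ∈ e ∧ c e = i}.ncard

private lemma sym2_exists_eq (e : Sym2 V) : ∃ u v, e = s(u, v) := by
  induction e using Sym2.ind with
  | _ u v => exact ⟨u, v, rfl⟩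

private lemma rainbow_arith (t n N K S : ℕ) (ht : 11 ≤ t) (hn : 2 ≤ n)
    (h2 : t * n ≤ 2 * N + 1) (h11 : 11 * n ≤ t * n)
    (hS : S + 2 * n = N + 5) (h4 : 2 * K * S ≤ n * n) :
    2 * t * (K - 1) + 2 * n ≤ N + 4 := by
  rcases Nat.eq_zero_or_pos K with hK | hK
  · subst hK; simp; omega
  · obtain ⟨k, rfl⟩ : ∃ k, K = k + 1 := ⟨K - 1, by omega⟩
    simp only [Nat.add_sub_cancel]
    have key : 2 * t * k + 1 ≤ S := by
      by_contra hcon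
      push_neg at hcon
      have hcon' : S ≤ 2 * t * k := by omega
      have hA : 2 * k * S + 2 * S ≤ n * n := by nlinarith
      have hB : t * n + 9 ≤ 2 * S + 4 * n := by omega
      nlinarith [sq_nonneg (t - 11), hcon', hA, hB, ht, hn,
        Nat.mul_le_mul_right S hcon', sq_nonneg n]
    omega

theorem rainbow_matching_decomposition
    [Fintype V] (t : ℕ) (ht : 11 ≤ t)
    (G : SimpleGraph V) (c : Sym2 V → ℕ)
    (hmon : ∀ (i : ℕ) (v : V), {e | e ∈ G.edgeSet ∧ v ∈ e ∧ c e = i}.ncard ≤ t) :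
    ∃ M : Fin (t * Fintype.card V / 2) → Finset (Sym2 V),
      (∀ j, IsRainbowMatching G c (M j)) ∧
      (∀ j j', j ≠ j' → Disjoint (M j) (M j')) ∧
      (∀ e : Sym2 V, e ∈ G.edgeSet ↔ ∃ j, e ∈ M j) := by
  classical
  set n := Fintype.card V with hn_def
  set N := t * n / 2 with hN_def
  set E := G.edgeFinset with hE_def
  -- trivial case: no edges
  rcases E.eq_empty_or_nonempty with hEe | hne
  · refine ⟨fun _ => ∅, ?_, ?_, ?_⟩
    · intro j
      refine ⟨by simp, by simp, by simp⟩
    · intro j j' _; simp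
    · intro e
      simp only [Finset.notMem_empty, exists_false, iff_false]
      intro he
      have : e ∈ E := by rw [hE_def, SimpleGraph.mem_edgeFinset]; exact he
      rw [hEe] at this; exact absurd this (Finset.notMem_empty e)
  -- basic facts
  have hn2 : 2 ≤ n := by
    obtain ⟨e₀, he₀⟩ := hne
    obtain ⟨a, b, rfl⟩ := sym2_exists_eq e₀
    have hadj : G.Adj a b := by
      rw [hE_def, SimpleGraph.mem_edgeFinset, SimpleGraph.mem_edgeSet] at he₀
      exact he₀
    exact Fintype.one_lt_card_iff_nontrivial.mpr ⟨a, b, hadj.ne⟩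
  have h2N : 2 * N ≤ t * n := by
    rw [hN_def]; omega
  have h2N' : t * n ≤ 2 * N + 1 := by
    rw [hN_def]; omega
  have h11n : 11 * n ≤ t * n := Nat.mul_le_mul_right n ht
  -- mono degree bound, finset form
  have hmonF : ∀ (i : ℕ) (v : V) (W : Finset (Sym2 V)),
      (∀ f ∈ W, f ∈ E ∧ v ∈ f ∧ c f = i) → W.card ≤ t := by
    intro i v W hW
    have h1 : (W : Set (Sym2 V)) ⊆ {e | e ∈ G.edgeSet ∧ v ∈ e ∧ c e = i} := by
      intro f hf
      obtain ⟨ha, hb, hc'⟩ := hW f hf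
      rw [hE_def, SimpleGraph.mem_edgeFinset] at ha
      exact ⟨ha, hb, hc'⟩
    calc W.card = (W : Set (Sym2 V)).ncard := (Set.ncard_coe_finset W).symm
      _ ≤ {e | e ∈ G.edgeSet ∧ v ∈ e ∧ c e = i}.ncard :=
          Set.ncard_le_ncard h1 (Set.toFinite _)
      _ ≤ t := hmon i v
  -- degree bound
  have hdegW : ∀ (v : V) (W : Finset (Sym2 V)),
      (∀ f ∈ W, f ∈ E ∧ v ∈ f) → W.card < n := by
    intro v W hW
    have hsub : W ⊆ G.incidenceFinset v := by
      intro f hf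
      rw [SimpleGraph.mem_incidenceFinset]
      obtain ⟨ha, hb⟩ := hW f hf
      rw [hE_def, SimpleGraph.mem_edgeFinset] at ha
      exact ⟨ha, hb⟩
    calc W.card ≤ (G.incidenceFinset v).card := card_le_card hsub
      _ = G.degree v := G.card_incidenceFinset_eq_degree v
      _ < n := G.degree_lt_card_verts v
  -- each edge has exactly two vertices
  have hedge2 : ∀ e ∈ E, (univ.filter (fun v => v ∈ e)).card = 2 := by
    intro e he
    obtain ⟨a, b, rfl⟩ := sym2_exists_eq e
    have hadj : G.Adj a b := by
      rw [hE_def, SimpleGraph.mem_edgeFinset, SimpleGraph.mem_edgeSet] at he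
      exact he
    have hset : univ.filter (fun v => v ∈ s(a, b)) = {a, b} := by
      ext x; simp [Sym2.mem_iff]
    rw [hset, card_insert_of_notMem (by simp [hadj.ne]), card_singleton]
  -- double counting: 2 * m_i ≤ t * n
  have hdouble : ∀ i : ℕ, 2 * (E.filter (fun e => c e = i)).card ≤ t * n := by
    intro i
    have h1 : ∀ e ∈ E.filter (fun e => c e = i), e ∈ E := fun e he => filter_subset _ _ he
    calc 2 * (E.filter (fun e => c e = i)).card
        = ∑ _e ∈ E.filter (fun e => c e = i), 2 := by
          rw [sum_const, smul_eq_mul, mul_comm]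
      _ = ∑ e ∈ E.filter (fun e => c e = i), (univ.filter (fun v => v ∈ e)).card :=
          sum_congr rfl (fun e he => (hedge2 e (h1 e he)).symm)
      _ = ∑ e ∈ E.filter (fun e => c e = i), ∑ v ∈ univ, (if v ∈ e then 1 else 0) :=
          sum_congr rfl (fun e _ => card_filter _ _)
      _ = ∑ v ∈ univ, ∑ e ∈ E.filter (fun e => c e = i), (if v ∈ e then 1 else 0) :=
          sum_comm
      _ = ∑ v ∈ univ, ((E.filter (fun e => c e = i)).filter (fun e => v ∈ e)).card :=
          sum_congr rfl (fun v _ => (card_filter _ _).symm)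
      _ ≤ ∑ _v ∈ univ, t := by
          refine sum_le_sum (fun v _ => ?_)
          refine hmonF i v _ (fun f hf => ?_)
          rw [mem_filter, mem_filter] at hf
          exact ⟨hf.1.1, hf.2, hf.1.2⟩
      _ = n * t := by rw [sum_const, smul_eq_mul, card_univ]
      _ = t * n := by ring
  have hmN : ∀ i : ℕ, (E.filter (fun e => c e = i)).card ≤ N := by
    intro i; have := hdouble i; omega
  -- Huge colours
  set Huge : Finset ℕ :=
    (E.image c).filter (fun i => N + 5 ≤ (E.filter (fun e => c e = i)).card + 2 * n)
    with hHuge_def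
  -- the key numeric bound
  have hHugeCard : 2 * t * (Huge.card - 1) + 2 * n ≤ N + 4 := by
    obtain ⟨S, hS⟩ : ∃ S, S + 2 * n = N + 5 := ⟨N + 5 - 2 * n, by omega⟩
    have hSm : ∀ i ∈ Huge, S ≤ (E.filter (fun e => c e = i)).card := by
      intro i hi
      rw [hHuge_def, mem_filter] at hi
      omega
    have hsum : Huge.card • S ≤ ∑ i ∈ Huge, (E.filter (fun e => c e = i)).card :=
      card_nsmul_le_sum _ _ _ hSm
    have hdisj : ∀ x ∈ Huge, ∀ y ∈ Huge, x ≠ y →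
        Disjoint (E.filter (fun e => c e = x)) (E.filter (fun e => c e = y)) := by
      intro x _ y _ hxy
      rw [disjoint_left]
      intro a ha ha'
      exact hxy ((mem_filter.mp ha).2 ▸ (mem_filter.mp ha').2 ▸ rfl)
    have hbuni : ∑ i ∈ Huge, (E.filter (fun e => c e = i)).card ≤ E.card := by
      rw [← card_biUnion hdisj]
      refine card_le_card ?_
      intro a ha
      obtain ⟨i, _, hai⟩ := mem_biUnion.mp ha
      exact (mem_filter.mp hai).1
    have hEcard : 2 * E.card ≤ n * n := by
      have hds : ∑ v : V, G.degree v = 2 * E.card := by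
        rw [hE_def]; exact G.sum_degrees_eq_twice_card_edges
      have hle : ∑ v : V, G.degree v ≤ n * n := by
        calc ∑ v : V, G.degree v ≤ ∑ _v : V, n :=
              sum_le_sum (fun v _ => le_of_lt (G.degree_lt_card_verts v))
          _ = n * n := by rw [sum_const, smul_eq_mul, card_univ]
      omega
    have h4 : 2 * Huge.card * S ≤ n * n := by
      rw [smul_eq_mul] at hsum
      nlinarith
    exact rainbow_arith t n N Huge.card S ht hn2 h2N' h11n hS h4
  -- phase 1
  have phase1 : ∀ hc : Finset ℕ, hc ⊆ Huge →
      ∃ A : Fin N → Finset (Sym2 V),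
        (∀ j, IsRainbowMatching G c (A j)) ∧
        (∀ j j', j ≠ j' → Disjoint (A j) (A j')) ∧
        (∀ e : Sym2 V, (∃ j, e ∈ A j) ↔ e ∈ E ∧ c e ∈ hc) := by
    intro hc
    induction hc using Finset.induction_on with
    | empty =>
      intro _
      refine ⟨fun _ => ∅, fun j => ⟨by simp, by simp, by simp⟩, fun j j' _ => by simp, fun e => by simp⟩
    | @insert i hc hi ih =>
      intro hsub
      obtain ⟨A, hA1, hA2, hA3⟩ := ih (fun x hx => hsub (mem_insert_of_mem hx))
      have hiHuge : i ∈ Huge := hsub (mem_insert_self i hc)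
      set F := E.filter (fun e => c e = i) with hF_def
      have hcolA : ∀ j, ∀ f ∈ A j, f ∈ E ∧ c f ∈ hc := fun j f hf => (hA3 f).mp ⟨j, hf⟩
      have hFA : ∀ y ∈ F, ∀ j, y ∉ A j := by
        intro y hy j hyA
        have h1 := (hcolA j y hyA).2
        have h2 := (mem_filter.mp hy).2
        rw [h2] at h1
        exact hi h1
      have hhccard : hc.card ≤ Huge.card - 1 := by
        have hsub2 : hc ⊆ Huge.erase i := fun x hx =>
          mem_erase.mpr ⟨fun h => hi (h ▸ hx), hsub (mem_insert_of_mem hx)⟩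
        calc hc.card ≤ (Huge.erase i).card := card_le_card hsub2
          _ = Huge.card - 1 := card_erase_of_mem hiHuge
      have hAcard : ∀ j, (A j).card ≤ hc.card := by
        intro j
        refine card_le_card_of_injOn c (fun f hf => (hcolA j f hf).2) ?_
        exact (hA1 j).2.2
      -- Hall condition
      have hHall : ∀ s : Finset {x // x ∈ F},
          s.card ≤ (s.biUnion (fun x => univ.filter
            (fun j : Fin N => ∀ f ∈ A j, ∀ w ∈ (x : Sym2 V), w ∉ f))).card := by
        intro s
        by_cases hsize : s.card + 2 * n ≤ N + 4
        · -- small case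
          rcases s.eq_empty_or_nonempty with rfl | ⟨x, hx⟩
          · simp
          obtain ⟨u, v, huv⟩ := sym2_exists_eq (x : Sym2 V)
          have hxF : (x : Sym2 V) ∈ F := x.2
          have hxE : (x : Sym2 V) ∈ E := (mem_filter.mp hxF).1
          have hxc : c (x : Sym2 V) = i := (mem_filter.mp hxF).2
          set bad := univ.filter (fun j : Fin N =>
              ¬ ∀ f ∈ A j, ∀ w ∈ (x : Sym2 V), w ∉ f) with hbad_def
          have hwit : ∀ j ∈ bad, ∃ g, g ∈ A j ∧ ∃ w, w ∈ (x : Sym2 V) ∧ w ∈ g := by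
            intro j hj
            have h := (mem_filter.mp hj).2
            push_neg at h
            obtain ⟨f, hf1, w, hw1, hw2⟩ := h
            exact ⟨f, hf1, w, hw1, hw2⟩
          set Wu := E.filter (fun f => f ≠ (x : Sym2 V) ∧ u ∈ f) with hWu_def
          set Wv := E.filter (fun f => f ≠ (x : Sym2 V) ∧ v ∈ f) with hWv_def
          have hWufact : Wu.card + 1 < n := by
            have h := hdegW u (insert (x : Sym2 V) Wu) ?_
            · rwa [card_insert_of_notMem (fun h' => ((mem_filter.mp h').2.1 rfl))] at h
            · intro f hf
              rcases mem_insert.mp hf with rfl | hf'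
              · exact ⟨hxE, by rw [huv]; exact Sym2.mem_mk_left u v⟩
              · exact ⟨(mem_filter.mp hf').1, (mem_filter.mp hf').2.2⟩
          have hWvfact : Wv.card + 1 < n := by
            have h := hdegW v (insert (x : Sym2 V) Wv) ?_
            · rwa [card_insert_of_notMem (fun h' => ((mem_filter.mp h').2.1 rfl))] at h
            · intro f hf
              rcases mem_insert.mp hf with rfl | hf'
              · exact ⟨hxE, by rw [huv]; exact Sym2.mem_mk_right u v⟩
              · exact ⟨(mem_filter.mp hf').1, (mem_filter.mp hf').2.2⟩
          have hbadcard : bad.card ≤ Wu.card + Wv.card := by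
            calc bad.card ≤ (Wu ∪ Wv).card := by
                  refine card_le_card_of_injOn
                    (fun j => if h : j ∈ bad then (hwit j h).choose else (x : Sym2 V)) ?_ ?_
                  · intro j hj
                    simp only [dif_pos (Finset.mem_coe.mp hj)]
                    obtain ⟨hg1, w, hw1, hw2⟩ := (hwit j hj).choose_spec
                    have hgE : (hwit j hj).choose ∈ E := (hcolA j _ hg1).1
                    have hgne : (hwit j hj).choose ≠ (x : Sym2 V) := by
                      intro h'
                      exact hFA (x : Sym2 V) hxF j (h' ▸ hg1)
                    rw [huv] at hw1
                    rcases Sym2.mem_iff.mp hw1 with rfl | rfl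
                    · exact mem_union_left _ (mem_filter.mpr ⟨hgE, hgne, hw2⟩)
                    · exact mem_union_right _ (mem_filter.mpr ⟨hgE, hgne, hw2⟩)
                  · intro j hj j' hj' heq
                    simp only [Finset.mem_coe] at hj hj'
                    by_contra hne
                    simp only [dif_pos hj, dif_pos hj'] at heq
                    have h1 := (hwit j hj).choose_spec.1
                    have h2 := (hwit j' hj').choose_spec.1
                    rw [heq] at h1
                    exact (disjoint_left.mp (hA2 j j' hne)) h1 h2
              _ ≤ Wu.card + Wv.card := card_union_le _ _
          have hsplit : (univ.filter (fun j : Fin N =>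
              ∀ f ∈ A j, ∀ w ∈ (x : Sym2 V), w ∉ f)).card + bad.card = N := by
            rw [hbad_def, card_filter_add_card_filter_not, card_univ, Fintype.card_fin]
          have hsubB : (univ.filter (fun j : Fin N =>
              ∀ f ∈ A (j : Fin N), ∀ w ∈ (x : Sym2 V), w ∉ f)).card ≤
              (s.biUnion (fun x => univ.filter
                (fun j : Fin N => ∀ f ∈ A j, ∀ w ∈ (x : Sym2 V), w ∉ f))).card :=
            card_le_card (subset_biUnion_of_mem (fun x : {x // x ∈ F} =>
              univ.filter (fun j : Fin N => ∀ f ∈ A j, ∀ w ∈ (x : Sym2 V), w ∉ f)) hx)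
          omega
        · -- large case
          push_neg at hsize
          have hcover : ∀ j : Fin N, ∃ x ∈ s, ∀ f ∈ A j, ∀ w ∈ (x : Sym2 V), w ∉ f := by
            intro j
            set sbad := s.filter (fun x => ¬ ∀ f ∈ A j, ∀ w ∈ x.val, w ∉ f) with hsbad_def
            have hsbadcard : sbad.card ≤ 2 * t * (Huge.card - 1) := by
              have himg : sbad.card = (sbad.image Subtype.val).card :=
                (card_image_of_injOn (Subtype.val_injective.injOn)).symm
              have hsubB : sbad.image Subtype.val ⊆
                  (A j).biUnion (fun f => F.filter (fun y => ∃ w, w ∈ y ∧ w ∈ f)) := by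
                intro y hy
                obtain ⟨x, hx1, rfl⟩ := mem_image.mp hy
                have h := (mem_filter.mp hx1).2
                push_neg at h
                obtain ⟨f, hf1, w, hw1, hw2⟩ := h
                exact mem_biUnion.mpr ⟨f, hf1, mem_filter.mpr ⟨x.2, w, hw1, hw2⟩⟩
              have hper : ∀ f ∈ A j, (F.filter (fun y => ∃ w, w ∈ y ∧ w ∈ f)).card ≤ 2 * t := by
                intro f hf
                obtain ⟨a, b, hab⟩ := sym2_exists_eq f
                have hsub2 : F.filter (fun y => ∃ w, w ∈ y ∧ w ∈ f) ⊆
                    F.filter (fun y => a ∈ y) ∪ F.filter (fun y => b ∈ y) := by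
                  intro y hy
                  obtain ⟨w, hw1, hw2⟩ := (mem_filter.mp hy).2
                  rw [hab] at hw2
                  rcases Sym2.mem_iff.mp hw2 with rfl | rfl
                  · exact mem_union_left _ (mem_filter.mpr ⟨(mem_filter.mp hy).1, hw1⟩)
                  · exact mem_union_right _ (mem_filter.mpr ⟨(mem_filter.mp hy).1, hw1⟩)
                have hta : (F.filter (fun y => a ∈ y)).card ≤ t := by
                  refine hmonF i a _ (fun g hg => ?_)
                  have h1 := mem_filter.mp hg
                  have h2 := mem_filter.mp h1.1
                  exact ⟨h2.1, h1.2, h2.2⟩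
                have htb : (F.filter (fun y => b ∈ y)).card ≤ t := by
                  refine hmonF i b _ (fun g hg => ?_)
                  have h1 := mem_filter.mp hg
                  have h2 := mem_filter.mp h1.1
                  exact ⟨h2.1, h1.2, h2.2⟩
                calc (F.filter (fun y => ∃ w, w ∈ y ∧ w ∈ f)).card
                    ≤ (F.filter (fun y => a ∈ y) ∪ F.filter (fun y => b ∈ y)).card :=
                      card_le_card hsub2
                  _ ≤ (F.filter (fun y => a ∈ y)).card + (F.filter (fun y => b ∈ y)).card :=
                      card_union_le _ _
                  _ ≤ t + t := add_le_add hta htb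
                  _ = 2 * t := by ring
              calc sbad.card
                  = (sbad.image Subtype.val).card := himg
                _ ≤ ((A j).biUnion (fun f => F.filter (fun y => ∃ w, w ∈ y ∧ w ∈ f))).card :=
                    card_le_card hsubB
                _ ≤ ∑ f ∈ A j, (F.filter (fun y => ∃ w, w ∈ y ∧ w ∈ f)).card :=
                    card_biUnion_le
                _ ≤ (A j).card • (2 * t) := sum_le_card_nsmul _ _ _ hper
                _ = (A j).card * (2 * t) := by rw [nsmul_eq_mul, Nat.cast_id]
                _ ≤ (Huge.card - 1) * (2 * t) :=
                    Nat.mul_le_mul_right _ (le_trans (hAcard j) hhccard)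
                _ = 2 * t * (Huge.card - 1) := by ring
            have hlt : sbad.card < s.card := by omega
            have hns : ¬ s ⊆ sbad := fun h => absurd (card_le_card h) (not_le.mpr hlt)
            obtain ⟨x, hx1, hx2⟩ := not_subset.mp hns
            refine ⟨x, hx1, ?_⟩
            by_contra hbad2
            exact hx2 (mem_filter.mpr ⟨hx1, hbad2⟩)
          have huniv : s.biUnion (fun x => univ.filter
              (fun j : Fin N => ∀ f ∈ A j, ∀ w ∈ (x : Sym2 V), w ∉ f)) = univ := by
            refine eq_univ_of_forall (fun j => ?_)
            obtain ⟨x, hx1, hx2⟩ := hcover j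
            exact mem_biUnion.mpr ⟨x, hx1, mem_filter.mpr ⟨mem_univ _, hx2⟩⟩
          rw [huniv, card_univ, Fintype.card_fin]
          calc s.card ≤ Fintype.card {x // x ∈ F} := card_le_univ s
            _ = F.card := Fintype.card_coe F
            _ ≤ N := hmN i
      obtain ⟨ψ, hψinj, hψmem⟩ :=
        (Finset.all_card_le_biUnion_card_iff_exists_injective
          (fun x : {x // x ∈ F} => univ.filter
            (fun j : Fin N => ∀ f ∈ A j, ∀ w ∈ (x : Sym2 V), w ∉ f))).mp hHall
      have hψgood : ∀ x : {x // x ∈ F}, ∀ f ∈ A (ψ x), ∀ w ∈ (x : Sym2 V), w ∉ f := by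
        intro x
        exact (mem_filter.mp (hψmem x)).2
      set B : Fin N → Finset (Sym2 V) := fun j =>
        A j ∪ (F.attach.filter (fun x => ψ x = j)).image Subtype.val with hB_def
      have hBmem : ∀ (y : Sym2 V) (j : Fin N),
          y ∈ B j ↔ y ∈ A j ∨ ∃ h : y ∈ F, ψ ⟨y, h⟩ = j := by
        intro y j
        rw [hB_def]
        simp only [mem_union, mem_image, mem_filter, mem_attach, true_and]
        constructor
        · rintro (h | ⟨x, hx, rfl⟩)
          · exact Or.inl h
          · exact Or.inr ⟨x.2, by rwa [Subtype.coe_eta]⟩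
        · rintro (h | ⟨h, hψ⟩)
          · exact Or.inl h
          · exact Or.inr ⟨⟨y, h⟩, hψ, rfl⟩
      have hFE : ∀ y ∈ F, y ∈ E := fun y hy => (mem_filter.mp hy).1
      have hFc : ∀ y ∈ F, c y = i := fun y hy => (mem_filter.mp hy).2
      refine ⟨B, ?_, ?_, ?_⟩
      · -- rainbow
        intro j
        obtain ⟨hA1a, hA1b, hA1c⟩ := hA1 j
        refine ⟨?_, ?_, ?_⟩
        · intro y hy
          rcases (hBmem y j).mp hy with h | ⟨h, _⟩
          · exact hA1a y h
          · have := hFE y h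
            rw [hE_def, SimpleGraph.mem_edgeFinset] at this
            exact this
        · intro y hy z hz hyz w hwy
          rcases (hBmem y j).mp hy with h1 | ⟨h1, hψ1⟩ <;>
            rcases (hBmem z j).mp hz with h2 | ⟨h2, hψ2⟩
          · exact hA1b y h1 z h2 hyz w hwy
          · intro hwz
            exact hψgood ⟨z, h2⟩ y (by rw [hψ2]; exact h1) w hwz hwy
          · exact hψgood ⟨y, h1⟩ z (by rw [hψ1]; exact h2) w hwy
          · exfalso
            have : (⟨y, h1⟩ : {x // x ∈ F}) = ⟨z, h2⟩ := hψinj (by rw [hψ1, hψ2])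
            exact hyz (congrArg Subtype.val this)
        · intro y hy z hz hcyz
          simp only [Finset.mem_coe] at hy hz
          rcases (hBmem y j).mp hy with h1 | ⟨h1, hψ1⟩ <;>
            rcases (hBmem z j).mp hz with h2 | ⟨h2, hψ2⟩
          · exact hA1c (Finset.mem_coe.mpr h1) (Finset.mem_coe.mpr h2) hcyz
          · exfalso
            have hy' := (hcolA j y h1).2
            rw [hcyz, hFc z h2] at hy'
            exact hi hy'
          · exfalso
            have hz' := (hcolA j z h2).2
            rw [← hcyz, hFc y h1] at hz'
            exact hi hz'
          · have : (⟨y, h1⟩ : {x // x ∈ F}) = ⟨z, h2⟩ := hψinj (by rw [hψ1, hψ2])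
            exact congrArg Subtype.val this
      · -- pairwise disjoint
        intro j j' hjj
        rw [disjoint_left]
        intro y hy hy'
        rcases (hBmem y j).mp hy with h1 | ⟨h1, hψ1⟩ <;>
          rcases (hBmem y j').mp hy' with h2 | ⟨h2, hψ2⟩
        · exact (disjoint_left.mp (hA2 j j' hjj)) h1 h2
        · exact hFA y h2 j h1
        · exact hFA y h1 j' h2
        · exact hjj (by rw [← hψ1, ← hψ2])
      · -- coverage
        intro y
        constructor
        · rintro ⟨j, hy⟩
          rcases (hBmem y j).mp hy with h1 | ⟨h1, _⟩
          · obtain ⟨hyE, hyc⟩ := hcolA j y h1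
            exact ⟨hyE, mem_insert_of_mem hyc⟩
          · refine ⟨hFE y h1, ?_⟩
            rw [hFc y h1]
            exact mem_insert_self i hc
        · rintro ⟨hyE, hyc⟩
          rcases mem_insert.mp hyc with h | h
          · have hyF : y ∈ F := mem_filter.mpr ⟨hyE, h⟩
            exact ⟨ψ ⟨y, hyF⟩, (hBmem y _).mpr (Or.inr ⟨hyF, rfl⟩)⟩
          · obtain ⟨j, hj⟩ := (hA3 y).mpr ⟨hyE, h⟩
            exact ⟨j, (hBmem y j).mpr (Or.inl hj)⟩
  -- phase 2
  have phase2 : ∀ (k : ℕ) (R : Finset (Sym2 V)), R.card ≤ k →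
      ∀ A : Fin N → Finset (Sym2 V),
      (∀ j, IsRainbowMatching G c (A j)) →
      (∀ j j', j ≠ j' → Disjoint (A j) (A j')) →
      (∀ e, e ∈ E ↔ (e ∈ R ∨ ∃ j, e ∈ A j)) →
      (∀ e ∈ R, ∀ j, e ∉ A j) →
      (∀ e ∈ R, (E.filter (fun f => c f = c e)).card + 2 * n ≤ N + 4) →
      ∃ B : Fin N → Finset (Sym2 V),
        (∀ j, IsRainbowMatching G c (B j)) ∧
        (∀ j j', j ≠ j' → Disjoint (B j) (B j')) ∧
        (∀ e, e ∈ E ↔ ∃ j, e ∈ B j) := by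
    intro k
    induction k with
    | zero =>
      intro R hR A h1 h2 h3 h4 h5
      have hRe : R = ∅ := card_eq_zero.mp (le_antisymm hR (Nat.zero_le _))
      subst hRe
      refine ⟨A, h1, h2, fun e => ?_⟩
      rw [h3 e]
      simp
    | succ k ih =>
      intro R hR A h1 h2 h3 h4 h5
      rcases R.eq_empty_or_nonempty with rfl | ⟨e, he⟩
      · refine ⟨A, h1, h2, fun e => ?_⟩
        rw [h3 e]
        simp
      obtain ⟨u, v, huv⟩ := sym2_exists_eq e
      have heE : e ∈ E := (h3 e).mpr (Or.inl he)
      set bad := univ.filter (fun j : Fin N =>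
        ∃ g ∈ A j, (∃ w, w ∈ e ∧ w ∈ g) ∨ c g = c e) with hbad_def
      set Wu := E.filter (fun f => f ≠ e ∧ u ∈ f) with hWu_def
      set Wv := E.filter (fun f => f ≠ e ∧ v ∈ f) with hWv_def
      set Wc := E.filter (fun f => f ≠ e ∧ c f = c e) with hWc_def
      have hAE : ∀ j, ∀ g ∈ A j, g ∈ E := by
        intro j g hg
        have := (h1 j).1 g hg
        rw [hE_def, SimpleGraph.mem_edgeFinset]
        exact this
      have hWufact : Wu.card + 1 < n := by
        have h := hdegW u (insert e Wu) ?_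
        · rwa [card_insert_of_notMem (fun h' => ((mem_filter.mp h').2.1 rfl))] at h
        · intro f hf
          rcases mem_insert.mp hf with rfl | hf'
          · exact ⟨heE, by rw [huv]; exact Sym2.mem_mk_left u v⟩
          · exact ⟨(mem_filter.mp hf').1, (mem_filter.mp hf').2.2⟩
      have hWvfact : Wv.card + 1 < n := by
        have h := hdegW v (insert e Wv) ?_
        · rwa [card_insert_of_notMem (fun h' => ((mem_filter.mp h').2.1 rfl))] at h
        · intro f hf
          rcases mem_insert.mp hf with rfl | hf'
          · exact ⟨heE, by rw [huv]; exact Sym2.mem_mk_right u v⟩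
          · exact ⟨(mem_filter.mp hf').1, (mem_filter.mp hf').2.2⟩
      have hWcfact : Wc.card + 1 ≤ (E.filter (fun f => c f = c e)).card := by
        have hsub : insert e Wc ⊆ E.filter (fun f => c f = c e) := by
          intro f hf
          rcases mem_insert.mp hf with rfl | hf'
          · exact mem_filter.mpr ⟨heE, rfl⟩
          · exact mem_filter.mpr ⟨(mem_filter.mp hf').1, (mem_filter.mp hf').2.2⟩
        calc Wc.card + 1
            = (insert e Wc).card :=
              (card_insert_of_notMem (fun h' => ((mem_filter.mp h').2.1 rfl))).symm
          _ ≤ _ := card_le_card hsub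
      have hwit : ∀ j ∈ bad, ∃ g, g ∈ A j ∧ ((∃ w, w ∈ e ∧ w ∈ g) ∨ c g = c e) := by
        intro j hj
        obtain ⟨g, hg1, hg2⟩ := (mem_filter.mp hj).2
        exact ⟨g, hg1, hg2⟩
      have hbadcard : bad.card ≤ Wu.card + Wv.card + Wc.card := by
        calc bad.card ≤ (Wu ∪ Wv ∪ Wc).card := by
              refine card_le_card_of_injOn
                (fun j => if h : j ∈ bad then (hwit j h).choose else e) ?_ ?_
              · intro j hj
                simp only [dif_pos (Finset.mem_coe.mp hj)]
                obtain ⟨hg1, hg2⟩ := (hwit j hj).choose_spec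
                have hgE : (hwit j hj).choose ∈ E := hAE j _ hg1
                have hgne : (hwit j hj).choose ≠ e := fun h' => h4 e he j (h' ▸ hg1)
                rcases hg2 with ⟨w, hw1, hw2⟩ | hcg
                · rw [huv] at hw1
                  rcases Sym2.mem_iff.mp hw1 with rfl | rfl
                  · exact mem_union_left _ (mem_union_left _ (mem_filter.mpr ⟨hgE, hgne, hw2⟩))
                  · exact mem_union_left _ (mem_union_right _ (mem_filter.mpr ⟨hgE, hgne, hw2⟩))
                · exact mem_union_right _ (mem_filter.mpr ⟨hgE, hgne, hcg⟩)
              · intro j hj j' hj' heq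
                simp only [Finset.mem_coe] at hj hj'
                by_contra hne
                simp only [dif_pos hj, dif_pos hj'] at heq
                have hg1 := (hwit j hj).choose_spec.1
                have hg2 := (hwit j' hj').choose_spec.1
                rw [heq] at hg1
                exact (disjoint_left.mp (h2 j j' hne)) hg1 hg2
          _ ≤ (Wu ∪ Wv).card + Wc.card := card_union_le _ _
          _ ≤ Wu.card + Wv.card + Wc.card := by
              have := card_union_le Wu Wv
              omega
      have hgoodex : ∃ j : Fin N, j ∉ bad := by
        by_contra hall
        push_neg at hall
        have hsub : (univ : Finset (Fin N)) ⊆ bad := fun j _ => hall j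
        have hcard := card_le_card hsub
        rw [card_univ, Fintype.card_fin] at hcard
        have h5e := h5 e he
        omega
      obtain ⟨j, hjgood⟩ := hgoodex
      have hgood : ∀ g ∈ A j, (∀ w ∈ e, w ∉ g) ∧ c g ≠ c e := by
        intro g hg
        constructor
        · intro w hw hwg
          exact hjgood (mem_filter.mpr ⟨mem_univ _, ⟨g, hg, Or.inl ⟨w, hw, hwg⟩⟩⟩)
        · intro hcg
          exact hjgood (mem_filter.mpr ⟨mem_univ _, ⟨g, hg, Or.inr hcg⟩⟩)
      set B := Function.update A j (insert e (A j)) with hB_def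
      have hBj : B j = insert e (A j) := by rw [hB_def, Function.update_self]
      have hBj' : ∀ j', j' ≠ j → B j' = A j' := by
        intro j' hj'
        rw [hB_def, Function.update_of_ne hj']
      have hBmem : ∀ (y : Sym2 V) (j' : Fin N),
          y ∈ B j' ↔ y ∈ A j' ∨ (j' = j ∧ y = e) := by
        intro y j'
        by_cases hj' : j' = j
        · subst hj'
          rw [hBj, mem_insert]
          constructor
          · rintro (rfl | h)
            · exact Or.inr ⟨rfl, rfl⟩
            · exact Or.inl h
          · rintro (h | ⟨-, rfl⟩)
            · exact Or.inr h
            · exact Or.inl rfl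
        · rw [hBj' j' hj']
          constructor
          · exact Or.inl
          · rintro (h | ⟨rfl, rfl⟩)
            · exact h
            · exact absurd rfl hj'
      have hB1 : ∀ j', IsRainbowMatching G c (B j') := by
        intro j'
        by_cases hj' : j' = j
        · subst hj'
          obtain ⟨ha, hb, hcinj⟩ := h1 j'
          rw [hBj]
          refine ⟨?_, ?_, ?_⟩
          · intro y hy
            rcases mem_insert.mp hy with rfl | h
            · rw [hE_def, SimpleGraph.mem_edgeFinset] at heE
              exact heE
            · exact ha y h
          · intro y hy z hz hyz w hwy
            rcases mem_insert.mp hy with rfl | h₁ <;> rcases mem_insert.mp hz with rfl | h₂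
            · exact absurd rfl hyz
            · exact (hgood z h₂).1 w hwy
            · intro hwz
              exact (hgood y h₁).1 w hwz hwy
            · exact hb y h₁ z h₂ hyz w hwy
          · intro y hy z hz hcyz
            simp only [coe_insert, Set.mem_insert_iff, Finset.mem_coe] at hy hz
            rcases hy with rfl | h₁ <;> rcases hz with rfl | h₂
            · rfl
            · exact absurd hcyz.symm (hgood z h₂).2
            · exact absurd hcyz (hgood y h₁).2
            · exact hcinj (Finset.mem_coe.mpr h₁) (Finset.mem_coe.mpr h₂) hcyz
        · rw [hBj' j' hj']
          exact h1 j'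
      have hB2 : ∀ j₁ j₂, j₁ ≠ j₂ → Disjoint (B j₁) (B j₂) := by
        intro j₁ j₂ hne
        rw [disjoint_left]
        intro y hy hy'
        rcases (hBmem y j₁).mp hy with h₁ | ⟨rfl, rfl⟩
        · rcases (hBmem y j₂).mp hy' with h₂ | ⟨rfl, rfl⟩
          · exact (disjoint_left.mp (h2 j₁ j₂ hne)) h₁ h₂
          · exact h4 y he j₁ h₁
        · rcases (hBmem y j₂).mp hy' with h₂ | ⟨h₂, -⟩
          · exact h4 y he j₂ h₂
          · exact hne h₂.symm
      refine ih (R.erase e) ?_ B hB1 hB2 ?_ ?_ ?_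
      · have := card_erase_of_mem he
        have hpos : 1 ≤ R.card := card_pos.mpr ⟨e, he⟩
        omega
      · intro y
        constructor
        · intro hyE
          rcases (h3 y).mp hyE with hyR | ⟨j₁, hj₁⟩
          · by_cases hye : y = e
            · subst hye
              exact Or.inr ⟨j, (hBmem y j).mpr (Or.inr ⟨rfl, rfl⟩)⟩
            · exact Or.inl (mem_erase.mpr ⟨hye, hyR⟩)
          · exact Or.inr ⟨j₁, (hBmem y j₁).mpr (Or.inl hj₁)⟩
        · rintro (hyR | ⟨j₁, hj₁⟩)
          · exact (h3 y).mpr (Or.inl (mem_erase.mp hyR).2)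
          · rcases (hBmem y j₁).mp hj₁ with h₁ | ⟨rfl, rfl⟩
            · exact (h3 y).mpr (Or.inr ⟨j₁, h₁⟩)
            · exact heE
      · intro y hy j₁ hj₁
        obtain ⟨hyne, hyR⟩ := mem_erase.mp hy
        rcases (hBmem y j₁).mp hj₁ with h₁ | ⟨rfl, rfl⟩
        · exact h4 y hyR j₁ h₁
        · exact hyne rfl
      · intro y hy
        exact h5 y (mem_erase.mp hy).2
  -- assemble
  obtain ⟨A, hA1, hA2, hA3⟩ := phase1 Huge (Finset.Subset.refl _)
  set R : Finset (Sym2 V) := E.filter (fun e => c e ∉ Huge) with hR_def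
  obtain ⟨B, hB1, hB2, hB3⟩ := phase2 R.card R le_rfl A hA1 hA2
    (by
      intro e
      constructor
      · intro he
        by_cases hcH : c e ∈ Huge
        · exact Or.inr ((hA3 e).mpr ⟨he, hcH⟩)
        · exact Or.inl (mem_filter.mpr ⟨he, hcH⟩)
      · rintro (he | he)
        · exact (mem_filter.mp he).1
        · exact ((hA3 e).mp he).1)
    (by
      intro e he j hej
      have := ((hA3 e).mp ⟨j, hej⟩).2
      exact (mem_filter.mp he).2 this)
    (by
      intro e he
      have heE : e ∈ E := (mem_filter.mp he).1
      have hnH : c e ∉ Huge := (mem_filter.mp he).2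
      have himg : c e ∈ E.image c := mem_image.mpr ⟨e, heE, rfl⟩
      rw [hHuge_def, mem_filter] at hnH
      push_neg at hnH
      have := hnH himg
      omega)
  refine ⟨B, hB1, hB2, ?_⟩
  intro e
  rw [← hB3 e, hE_def, SimpleGraph.mem_edgeFinset]
end

section
/- Let G be an edge-coloured graph, let c_1, …, c_ℓ be distinct colours, and let W = {x_1, y_1, z_1, …, x_ℓ, y_ℓ, z_ℓ, w} be 3ℓ+1 distinct vertices such that for each i ∈ [ℓ], x_i y_i and z_i w are edges both of colour c_i. Then W is a ({c_1,…,c_ℓ}, ℓ+1)-adapter: there exist rainbow matchings M_1, …, M_{ℓ+1} in G[W], each using exactly the colour set {c_1,…,c_ℓ}, such that every vertex of W is missed by at least one M_i. -/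
variable {V : Type*}

/-- `W` is a `(C, ℓ)`-adapter: there are rainbow matchings `M 1, …, M ℓ` in `G[W]`,
each with colour set exactly `C`, such that every vertex of `W` is missed by some `M i`. -/
def IsAdapter (G : SimpleGraph V) (c : Sym2 V → ℕ) (C : Finset ℕ) (ℓ : ℕ) (W : Set V) : Prop :=
  ∃ M : Fin ℓ → Finset (Sym2 V),
    (∀ i, IsRainbowMatching G c (M i)) ∧
    (∀ i, ∀ e ∈ M i, ∀ v : V, v ∈ e → v ∈ W) ∧
    (∀ i, (M i).image c = C) ∧
    ∀ w ∈ W, ∃ i, ¬ coveredBy (M i) w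

theorem adapter_basic_construction
    (G : SimpleGraph V) (c : Sym2 V → ℕ) (ℓ : ℕ)
    (col : Fin ℓ → ℕ) (hcol : Function.Injective col)
    (x y z : Fin ℓ → V) (w : V)
    (hx : Function.Injective x) (hy : Function.Injective y) (hz : Function.Injective z)
    (hxy : ∀ i j, x i ≠ y j) (hxz : ∀ i j, x i ≠ z j) (hyz : ∀ i j, y i ≠ z j)
    (hw : ∀ i, w ≠ x i ∧ w ≠ y i ∧ w ≠ z i)
    (hadj1 : ∀ i, G.Adj (x i) (y i)) (hc1 : ∀ i, c s(x i, y i) = col i)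
    (hadj2 : ∀ i, G.Adj (z i) w) (hc2 : ∀ i, c s(z i, w) = col i) :
    IsAdapter G c (Finset.univ.image col) (ℓ + 1)
      ({w} ∪ Set.range x ∪ Set.range y ∪ Set.range z) := by
  classical
  have hdisjxy : ∀ j j' : Fin ℓ, j ≠ j' → ∀ v : V, v ∈ s(x j, y j) → v ∉ s(x j', y j') := by
    intro j j' hne v hv hv'
    rw [Sym2.mem_iff] at hv hv'
    rcases hv with rfl | rfl <;> rcases hv' with h | h
    · exact hne (hx h)
    · exact hxy j j' h
    · exact hxy j' j h.symm
    · exact hne (hy h)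
  have hzwxy : ∀ (k j : Fin ℓ) (v : V), v ∈ s(z k, w) → v ∉ s(x j, y j) := by
    intro k j v hv hv'
    rw [Sym2.mem_iff] at hv hv'
    rcases hv with rfl | rfl <;> rcases hv' with h | h
    · exact hxz j k h.symm
    · exact hyz j k h.symm
    · exact (hw j).1 h
    · exact (hw j).2.1 h
  have hzwne : ∀ k j : Fin ℓ, s(z k, w) ≠ s(x j, y j) := by
    intro k j h
    exact hzwxy k j (z k) (by simp) (h ▸ (by simp : z k ∈ s(z k, w)))
  have hxyeq : ∀ j j' : Fin ℓ, s(x j, y j) = s(x j', y j') → j = j' := by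
    intro j j' h
    rw [Sym2.eq_iff] at h
    rcases h with ⟨h1, _⟩ | ⟨h1, _⟩
    · exact hx h1
    · exact absurd h1 (hxy j j')
  refine ⟨fun i => if h : (i : ℕ) < ℓ then
      insert s(z ⟨i, h⟩, w) ((Finset.univ.erase ⟨i, h⟩).image fun j => s(x j, y j))
    else Finset.univ.image fun j => s(x j, y j), ?_, ?_, ?_, ?_⟩
  · -- rainbow matching
    intro i
    by_cases h : (i : ℕ) < ℓ
    · simp only [dif_pos h]
      set k : Fin ℓ := ⟨i, h⟩
      refine ⟨?_, ?_, ?_⟩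
      · intro e he
        simp only [Finset.mem_insert, Finset.mem_image, Finset.mem_erase, Finset.mem_univ] at he
        rcases he with rfl | ⟨j, _, rfl⟩
        · exact (hadj2 k)
        · exact (hadj1 j)
      · intro e he f hf hef v hve hvf
        simp only [Finset.mem_insert, Finset.mem_image, Finset.mem_erase, Finset.mem_univ] at he hf
        rcases he with rfl | ⟨j, _, rfl⟩ <;> rcases hf with rfl | ⟨j', _, rfl⟩
        · exact hef rfl
        · exact hzwxy k j' v hve hvf
        · exact hzwxy k j v hvf hve
        · exact hdisjxy j j' (fun hjj => hef (by rw [hjj])) v hve hvf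
      · intro e he f hf hcef
        simp only [Finset.coe_insert, Finset.coe_image, Set.mem_insert_iff,
          Set.mem_image, Finset.mem_coe, Finset.mem_erase, Finset.mem_univ,
          and_true] at he hf
        rcases he with rfl | ⟨j, hj, rfl⟩ <;> rcases hf with rfl | ⟨j', hj', rfl⟩
        · rfl
        · rw [hc2 k, hc1 j'] at hcef
          exact absurd (hcol hcef).symm hj'
        · rw [hc2 k, hc1 j] at hcef
          exact absurd (hcol hcef) hj
        · rw [hc1 j, hc1 j'] at hcef
          rw [hcol hcef]
    · simp only [dif_neg h]
      refine ⟨?_, ?_, ?_⟩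
      · intro e he
        simp only [Finset.mem_image, Finset.mem_univ, true_and] at he
        rcases he with ⟨j, rfl⟩
        exact hadj1 j
      · intro e he f hf hef v hve hvf
        simp only [Finset.mem_image, Finset.mem_univ, true_and] at he hf
        rcases he with ⟨j, rfl⟩
        rcases hf with ⟨j', rfl⟩
        exact hdisjxy j j' (fun hjj => hef (by rw [hjj])) v hve hvf
      · intro e he f hf hcef
        simp only [Finset.coe_image, Finset.coe_univ, Set.image_univ, Set.mem_range] at he hf
        rcases he with ⟨j, rfl⟩
        rcases hf with ⟨j', rfl⟩
        rw [hc1 j, hc1 j'] at hcef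
        rw [hcol hcef]
  · -- edges within W
    intro i e he v hve
    by_cases h : (i : ℕ) < ℓ
    · simp only [dif_pos h] at he
      simp only [Finset.mem_insert, Finset.mem_image, Finset.mem_erase, Finset.mem_univ] at he
      rcases he with rfl | ⟨j, _, rfl⟩
      · rw [Sym2.mem_iff] at hve
        rcases hve with rfl | rfl
        · exact Or.inr ⟨⟨i, h⟩, rfl⟩
        · exact Or.inl (Or.inl (Or.inl rfl))
      · rw [Sym2.mem_iff] at hve
        rcases hve with rfl | rfl
        · exact Or.inl (Or.inl (Or.inr ⟨j, rfl⟩))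
        · exact Or.inl (Or.inr ⟨j, rfl⟩)
    · simp only [dif_neg h] at he
      simp only [Finset.mem_image, Finset.mem_univ, true_and] at he
      rcases he with ⟨j, rfl⟩
      rw [Sym2.mem_iff] at hve
      rcases hve with rfl | rfl
      · exact Or.inl (Or.inl (Or.inr ⟨j, rfl⟩))
      · exact Or.inl (Or.inr ⟨j, rfl⟩)
  · -- colour sets
    intro i
    by_cases h : (i : ℕ) < ℓ
    · simp only [dif_pos h]
      ext a
      simp only [Finset.mem_image, Finset.mem_insert, Finset.mem_erase, Finset.mem_univ,
        true_and, and_true]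
      constructor
      · rintro ⟨e, he, rfl⟩
        rcases he with rfl | ⟨j, _, rfl⟩
        · exact ⟨⟨i, h⟩, (hc2 _).symm⟩
        · exact ⟨j, (hc1 j).symm⟩
      · rintro ⟨j, rfl⟩
        by_cases hj : j = ⟨i, h⟩
        · exact ⟨s(z ⟨i, h⟩, w), Or.inl rfl, by rw [hc2, hj]⟩
        · exact ⟨s(x j, y j), Or.inr ⟨j, hj, rfl⟩, hc1 j⟩
    · simp only [dif_neg h]
      ext a
      simp only [Finset.mem_image, Finset.mem_univ, true_and]
      constructor
      · rintro ⟨e, ⟨j, rfl⟩, rfl⟩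
        exact ⟨j, (hc1 j).symm⟩
      · rintro ⟨j, rfl⟩
        exact ⟨s(x j, y j), ⟨j, rfl⟩, hc1 j⟩
  · -- every vertex missed
    intro v hv
    have hlast : ¬ ((⟨ℓ, Nat.lt_succ_self ℓ⟩ : Fin (ℓ + 1)) : ℕ) < ℓ := lt_irrefl ℓ
    rcases hv with ((rfl | ⟨k, rfl⟩) | ⟨k, rfl⟩) | ⟨k, rfl⟩
    · -- v = w
      refine ⟨⟨ℓ, Nat.lt_succ_self ℓ⟩, ?_⟩
      simp only [dif_neg hlast]
      rintro ⟨e, he, hve⟩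
      simp only [Finset.mem_image, Finset.mem_univ, true_and] at he
      rcases he with ⟨j, rfl⟩
      rw [Sym2.mem_iff] at hve
      rcases hve with h | h
      · exact (hw j).1 h
      · exact (hw j).2.1 h
    · -- v = x k
      refine ⟨⟨(k : ℕ), k.isLt.trans (Nat.lt_succ_self ℓ)⟩, ?_⟩
      simp only [dif_pos k.isLt, Fin.eta]
      rintro ⟨e, he, hve⟩
      simp only [Finset.mem_insert, Finset.mem_image, Finset.mem_erase, Finset.mem_univ] at he
      rcases he with rfl | ⟨j, hj, rfl⟩
      · exact hzwxy _ k _ hve (by simp)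
      · exact hdisjxy j k (by simpa using hj) (x k) hve (by simp)
    · -- v = y k
      refine ⟨⟨(k : ℕ), k.isLt.trans (Nat.lt_succ_self ℓ)⟩, ?_⟩
      simp only [dif_pos k.isLt, Fin.eta]
      rintro ⟨e, he, hve⟩
      simp only [Finset.mem_insert, Finset.mem_image, Finset.mem_erase, Finset.mem_univ] at he
      rcases he with rfl | ⟨j, hj, rfl⟩
      · exact hzwxy _ k _ hve (by simp)
      · exact hdisjxy j k (by simpa using hj) (y k) hve (by simp)
    · -- v = z k
      refine ⟨⟨ℓ, Nat.lt_succ_self ℓ⟩, ?_⟩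
      simp only [dif_neg hlast]
      rintro ⟨e, he, hve⟩
      simp only [Finset.mem_image, Finset.mem_univ, true_and] at he
      rcases he with ⟨j, rfl⟩
      rw [Sym2.mem_iff] at hve
      rcases hve with h | h
      · exact hxz j k h.symm
      · exact hyz j k h.symm
end

section
/- Let G be an edge-coloured graph and C a colour set. Suppose W ⊆ V(G) is a (C, ℓ)-adapter, x, y, z ∈ V(G) \ W are distinct, w ∈ W, and xy and zw are edges with c(xy) = c(zw) ∉ C. Then W ∪ {x, y, z} is a (C ∪ {c(xy)}, ℓ+1)-adapter. -/
variable {V : Type*}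

theorem adapter_extend
    (G : SimpleGraph V) (c : Sym2 V → ℕ) (C : Finset ℕ) (ℓ : ℕ)
    (W : Set V) (hW : IsAdapter G c C ℓ W)
    (x y z w : V) (hw : w ∈ W)
    (hx : x ∉ W) (hy : y ∉ W) (hz : z ∉ W)
    (hxy : x ≠ y) (hxz : x ≠ z) (hyz : y ≠ z)
    (hadj1 : G.Adj x y) (hadj2 : G.Adj z w)
    (hcol : c s(x, y) = c s(z, w)) (hnotin : c s(x, y) ∉ C) :
    IsAdapter G c (insert (c s(x, y)) C) (ℓ + 1) (W ∪ {x, y, z}) := by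
  classical
  obtain ⟨M, hM, hMW, hMC, hmiss⟩ := hW
  obtain ⟨i₀, hi₀⟩ := hmiss w hw
  have hcC : ∀ (i : Fin ℓ), ∀ e ∈ M i, c e ∈ C := by
    intro i e he
    rw [← hMC i]
    exact Finset.mem_image_of_mem c he
  have hxyW : ∀ v : V, v ∈ s(x, y) → v ∉ W := by
    intro v hv
    rcases Sym2.mem_iff.mp hv with rfl | rfl
    · exact hx
    · exact hy
  have hzwnot : ∀ v : V, v ∈ s(z, w) → v = z ∨ v = w := fun v hv => Sym2.mem_iff.mp hv
  classical
  refine ⟨fun i => if h : (i : ℕ) < ℓ then insert s(x, y) (M ⟨i, h⟩)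
      else insert s(z, w) (M i₀), ?_, ?_, ?_, ?_⟩
  · intro i
    by_cases h : (i : ℕ) < ℓ
    · simp only [dif_pos h]
      set j : Fin ℓ := ⟨i, h⟩
      obtain ⟨hE, hD, hI⟩ := hM j
      refine ⟨?_, ?_, ?_⟩
      · intro e he
        rcases Finset.mem_insert.mp he with rfl | he
        · exact hadj1
        · exact hE e he
      · intro e he f hf hef v hve hvf
        rcases Finset.mem_insert.mp he with rfl | he <;>
          rcases Finset.mem_insert.mp hf with rfl | hf
        · exact hef rfl
        · exact hxyW v hve (hMW j f hf v hvf)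
        · exact hxyW v hvf (hMW j e he v hve)
        · exact hD e he f hf hef v hve hvf
      · intro a ha b hb hab
        simp only [Finset.coe_insert, Set.mem_insert_iff, Finset.mem_coe] at ha hb
        rcases ha with rfl | ha <;> rcases hb with rfl | hb
        · rfl
        · exact absurd (hab ▸ hcC j b hb) hnotin
        · exact absurd (hab ▸ hcC j a ha) hnotin
        · exact hI ha hb hab
    · simp only [dif_neg h]
      obtain ⟨hE, hD, hI⟩ := hM i₀
      refine ⟨?_, ?_, ?_⟩
      · intro e he
        rcases Finset.mem_insert.mp he with rfl | he
        · exact hadj2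
        · exact hE e he
      · intro e he f hf hef v hve hvf
        rcases Finset.mem_insert.mp he with rfl | he' <;>
          rcases Finset.mem_insert.mp hf with rfl | hf'
        · exact hef rfl
        · rcases hzwnot v hve with hvz | hvw
          · exact hz (hvz ▸ hMW i₀ f hf' v hvf)
          · exact hi₀ ⟨f, hf', hvw ▸ hvf⟩
        · rcases hzwnot v hvf with hvz | hvw
          · exact hz (hvz ▸ hMW i₀ e he' v hve)
          · exact hi₀ ⟨e, he', hvw ▸ hve⟩
        · exact hD e he' f hf' hef v hve hvf
      · intro a ha b hb hab
        simp only [Finset.coe_insert, Set.mem_insert_iff, Finset.mem_coe] at ha hb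
        rcases ha with rfl | ha <;> rcases hb with rfl | hb
        · rfl
        · exact absurd ((hcol.trans hab) ▸ hcC i₀ b hb) hnotin
        · exact absurd ((hcol.trans hab.symm) ▸ hcC i₀ a ha) hnotin
        · exact hI ha hb hab
  · intro i e he v hve
    by_cases h : (i : ℕ) < ℓ
    · simp only [dif_pos h] at he
      rcases Finset.mem_insert.mp he with rfl | he
      · rcases Sym2.mem_iff.mp hve with rfl | rfl
        · exact Or.inr (by simp)
        · exact Or.inr (by simp)
      · exact Or.inl (hMW _ e he v hve)
    · simp only [dif_neg h] at he
      rcases Finset.mem_insert.mp he with rfl | he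
      · rcases hzwnot v hve with rfl | rfl
        · exact Or.inr (by simp)
        · exact Or.inl hw
      · exact Or.inl (hMW i₀ e he v hve)
  · intro i
    by_cases h : (i : ℕ) < ℓ
    · simp only [dif_pos h, Finset.image_insert, hMC]
    · simp only [dif_neg h, Finset.image_insert, hMC, ← hcol]
  · intro v hv
    rcases hv with hv | hv
    · obtain ⟨j, hj⟩ := hmiss v hv
      refine ⟨⟨j, j.isLt.trans (Nat.lt_succ_self ℓ)⟩, ?_⟩
      rintro ⟨e, he, hve⟩
      simp only [dif_pos j.isLt] at he
      rcases Finset.mem_insert.mp he with rfl | he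
      · exact hxyW v hve hv
      · exact hj ⟨e, he, hve⟩
    · rcases hv with rfl | rfl | rfl
      · refine ⟨⟨ℓ, Nat.lt_succ_self ℓ⟩, ?_⟩
        rintro ⟨e, he, hve⟩
        simp only [dif_neg (lt_irrefl ℓ)] at he
        rcases Finset.mem_insert.mp he with rfl | he
        · rcases hzwnot v hve with rfl | rfl
          · exact hxz rfl
          · exact hx hw
        · exact hx (hMW i₀ e he v hve)
      · refine ⟨⟨ℓ, Nat.lt_succ_self ℓ⟩, ?_⟩
        rintro ⟨e, he, hve⟩
        simp only [dif_neg (lt_irrefl ℓ)] at he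
        rcases Finset.mem_insert.mp he with rfl | he
        · rcases hzwnot v hve with rfl | rfl
          · exact hyz rfl
          · exact hy hw
        · exact hy (hMW i₀ e he v hve)
      · refine ⟨⟨i₀, i₀.isLt.trans (Nat.lt_succ_self ℓ)⟩, ?_⟩
        rintro ⟨e, he, hve⟩
        simp only [dif_pos i₀.isLt] at he
        rcases Finset.mem_insert.mp he with rfl | he
        · rcases Sym2.mem_iff.mp hve with rfl | rfl
          · exact hxz rfl
          · exact hyz rfl
        · exact hz (hMW _ e he v hve)
end
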